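/- arXiv:1708.09777 — 2 statements merged into one kernel-verified Lean document; each statement's English description precedes it below -/
import Mathlib

section
/- Let n ≥ 5 and let h(n) = n+1 if n ≡ 0 (mod 4) and h(n) = n otherwise. If f: E(K_n) → {-1, 1} is a weighting with min{e(-1), e(1)} ≥ h(n), where e(i) is the number of edges of weight i, then there exists a 4-element subset of the vertices whose six edge weights sum to 0 (a zero-sum copy of K_4). -/
/-!
A `K₄` of a `±1`-weighting is zero-sum exactly when three of its six edges are negative.
Monochromatic triangles of both signs cannot coexist: take a negative edge `ab` and a positive edge
`xy` on them (from triangles `vab`, `vxy` through a common vertex, or from disjoint triangles);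
the other `K₄`s through these vertices give the four weights between `{a, b}` and `{x, y}` row sums
of one sign and column sums of the other, so they add up to `0` and `{a, b, x, y}` is zero-sum.
Up to replacing `f` by `-f`, the negative edges thus form a triangle-free graph, in which three
neighbours of a vertex would span a zero-sum `K₄`. So all degrees are at most `2` and there are at
most `n` negative edges; with exactly `n` the graph is `2`-regular, and the same observation forces
every component to be a `4`-cycle, so `4 ∣ n`.
-/

open Finset SimpleGraph

section

variable {V : Type*} [DecidableEq V]

theorem Finset.sum_powersetCard_two_insert {M : Type*} [AddCommMonoid M] (f : Finset V → M)
    {a : V} {s : Finset V} (ha : a ∉ s) :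
    ∑ e ∈ powersetCard 2 (insert a s), f e = ∑ e ∈ powersetCard 2 s, f e + ∑ x ∈ s, f {a, x} := by
  have hnot : ∀ t ⊆ s, a ∉ t := fun t ht h => ha (ht h)
  rw [powersetCard_succ_insert ha, sum_union, sum_image, powersetCard_one, sum_map]
  · rfl
  · intro t ht t' ht' h
    rw [← erase_insert (hnot t (mem_powersetCard.1 ht).1), h,
      erase_insert (hnot t' (mem_powersetCard.1 ht').1)]
  · refine disjoint_left.2 fun t ht ht' => ?_
    obtain ⟨u, -, rfl⟩ := mem_image.1 ht'
    exact hnot _ (mem_powersetCard.1 ht).1 (mem_insert_self a u)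

theorem Finset.sum_powersetCard_two_quad {M : Type*} [AddCommMonoid M] (f : Finset V → M)
    {a b c d : V} (hab : a ≠ b) (hac : a ≠ c) (had : a ≠ d) (hbc : b ≠ c) (hbd : b ≠ d)
    (hcd : c ≠ d) :
    ∑ e ∈ powersetCard 2 {a, b, c, d}, f e =
      f {a, b} + f {a, c} + f {a, d} + f {b, c} + f {b, d} + f {c, d} := by
  rw [sum_powersetCard_two_insert f (by simp [hab, hac, had]),
    sum_powersetCard_two_insert f (by simp [hbc, hbd]),
    sum_powersetCard_two_insert f (by simpa using hcd)]
  simp [sum_insert, hbc, hbd, hcd, powersetCard_eq_empty.2 (by simp : #{d} < 2)]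
  abel

end

namespace SimpleGraph

variable {V : Type*} [Fintype V] (G : SimpleGraph V) [DecidableRel G.Adj]

theorem two_mul_card_edgeFinset_le {k : ℕ} (h : ∀ v, G.degree v ≤ k) :
    2 * #G.edgeFinset ≤ k * Fintype.card V := by
  rw [← sum_degrees_eq_twice_card_edges]
  calc ∑ v, G.degree v ≤ ∑ _v : V, k := sum_le_sum fun v _ => h v
    _ = k * Fintype.card V := by simp [mul_comm]

theorem isRegularOfDegree_of_two_mul_card_edgeFinset_eq {k : ℕ} (h : ∀ v, G.degree v ≤ k)
    (he : 2 * #G.edgeFinset = k * Fintype.card V) : G.IsRegularOfDegree k := by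
  rw [← sum_degrees_eq_twice_card_edges] at he
  have := (sum_eq_sum_iff_of_le fun v _ => h v).1 (he.trans (by simp [mul_comm]))
  exact fun v => this v (mem_univ v)

variable [DecidableEq V]

def closedBallTwo (v : V) : Finset V :=
  insert v ((G.neighborFinset v).biUnion fun u => insert u (G.neighborFinset u))

variable {G}

theorem neighborFinset_eq_pair {x y z : V} (hx : G.degree x = 2) (hy : G.Adj x y)
    (hz : G.Adj x z) (hyz : y ≠ z) : G.neighborFinset x = {y, z} := by
  refine (eq_of_subset_of_card_le ?_ ?_).symm
  · intro w hw
    rcases mem_insert.1 hw with rfl | hw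
    · simpa using hy
    · simpa [mem_singleton.1 hw] using hz
  · rw [card_neighborFinset_eq_degree, hx, card_pair hyz]

theorem closedBallTwo_eq_of_fourCycle {v b c d : V} (hv : G.neighborFinset v = {b, c})
    (hb : G.neighborFinset b = {v, d}) (hc : G.neighborFinset c = {v, d})
    (hd : G.neighborFinset d = {b, c}) :
    ∀ w ∈ ({v, b, c, d} : Finset V), G.closedBallTwo w = {v, b, c, d} := by
  intro w hw
  simp only [mem_insert, mem_singleton] at hw
  rcases hw with rfl | rfl | rfl | rfl <;> ext <;> simp [closedBallTwo, hv, hb, hc, hd] <;> tauto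

end SimpleGraph

theorem Fintype.dvd_card_of_blocks {V : Type*} [Fintype V] [DecidableEq V] (B : V → Finset V)
    {k : ℕ} (h : ∀ v, v ∈ B v ∧ #(B v) = k ∧ ∀ w ∈ B v, B w = B v) : k ∣ Fintype.card V := by
  rw [← card_univ (α := V), card_eq_sum_card_image B univ]
  refine dvd_sum fun s hs => ?_
  obtain ⟨v, -, rfl⟩ := mem_image.1 hs
  have hfiber : {w ∈ (univ : Finset V) | B w = B v} = B v := by
    ext w
    simp only [mem_filter, mem_univ, true_and]
    exact ⟨fun hw => hw ▸ (h w).1, (h v).2.2 w⟩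
  rw [hfiber, (h v).2.1]

section SignWeighting

variable {V : Type*} [DecidableEq V]

def IsSignWeighting (f : Finset V → ℤ) : Prop :=
  ∀ ⦃x y : V⦄, x ≠ y → f {x, y} = -1 ∨ f {x, y} = 1

def ZeroSumK4Free (f : Finset V → ℤ) : Prop :=
  ∀ ⦃a b c d : V⦄, a ≠ b → a ≠ c → a ≠ d → b ≠ c → b ≠ d → c ≠ d →
    f {a, b} + f {a, c} + f {a, d} + f {b, c} + f {b, d} + f {c, d} ≠ 0

variable {f : Finset V → ℤ}

theorem IsSignWeighting.neg (hf : IsSignWeighting f) :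
    IsSignWeighting (-f) := fun x y hxy => by
  rcases hf hxy with h | h <;> simp [h]

theorem ZeroSumK4Free.neg (h4 : ZeroSumK4Free f) :
    ZeroSumK4Free (-f) := fun a b c d hab hac had hbc hbd hcd h =>
  h4 hab hac had hbc hbd hcd (by simp only [Pi.neg_apply] at h; linarith)

abbrev signGraph (f : Finset V → ℤ) (s : ℤ) : SimpleGraph V where
  Adj x y := x ≠ y ∧ f {x, y} = s
  symm := ⟨fun x y h => ⟨h.1.symm, by rw [pair_comm]; exact h.2⟩⟩
  loopless := ⟨fun _ h => h.1 rfl⟩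

instance (f : Finset V → ℤ) (s : ℤ) : DecidableRel (signGraph f s).Adj := fun x y =>
  inferInstanceAs (Decidable (x ≠ y ∧ f {x, y} = s))

theorem signGraph_neg (s : ℤ) : signGraph (-f) (-s) = signGraph f s := by
  ext x y
  simp

theorem card_edgeFinset_signGraph [Fintype V] (s : ℤ) :
    #(signGraph f s).edgeFinset = #{e ∈ powersetCard 2 univ | f e = s} := by
  refine card_nbij Sym2.toFinset ?_ ?_ ?_
  · intro e he
    induction e with | h x y => ?_
    have hxy : (signGraph f s).Adj x y := by simpa using he
    simp [Sym2.toFinset_mk_eq, card_pair hxy.1, hxy.2]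
  · exact fun e _ e' _ h => Sym2.ext fun x => by rw [← Sym2.mem_toFinset, h, Sym2.mem_toFinset]
  · intro e he
    simp only [coe_filter, mem_powersetCard, subset_univ, true_and, Set.mem_ofPred_eq] at he
    obtain ⟨x, y, hxy, rfl⟩ := card_eq_two.1 he.1
    exact ⟨s(x, y), by simpa using (⟨hxy, he.2⟩ : (signGraph f s).Adj x y), Sym2.toFinset_mk_eq⟩

theorem IsSignWeighting.eq_one_of_not_adj (hf : IsSignWeighting f) {x y : V}
    (hxy : x ≠ y) (h : ¬(signGraph f (-1)).Adj x y) : f {x, y} = 1 :=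
  (hf hxy).resolve_left fun h' => h ⟨hxy, h'⟩

def InTriangle (G : SimpleGraph V) (v : V) : Prop := ∃ b c, G.Adj v b ∧ G.Adj v c ∧ G.Adj b c

theorem ZeroSumK4Free.not_inTriangle_signGraph (hf : IsSignWeighting f)
    (h4 : ZeroSumK4Free f) (v : V) :
    ¬(InTriangle (signGraph f (-1)) v ∧ InTriangle (signGraph f 1) v) := by
  rintro ⟨⟨b, c, ⟨hvb, fvb⟩, ⟨hvc, fvc⟩, ⟨hbc, fbc⟩⟩, ⟨y, z, ⟨hvy, fvy⟩, ⟨hvz, fvz⟩, ⟨hyz, fyz⟩⟩⟩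
  have hne : ∀ {u w : V}, f {v, u} = -1 → f {v, w} = 1 → u ≠ w := by
    rintro u w hu hw rfl
    omega
  have hby := hne fvb fvy
  have hbz := hne fvb fvz
  have hcy := hne fvc fvy
  have hcz := hne fvc fvz
  -- `{v, b, y, z}` and `{v, c, y, z}` make the rows of the weights between `{b, c}` and `{y, z}`
  -- sum to `≥ 0`, `{v, b, c, y}` and `{v, b, c, z}` make its columns sum to `≤ 0`; so
  -- `{b, c, y, z}` is zero-sum.
  have := h4 hvb hvy hvz hby hbz hyz
  have := h4 hvc hvy hvz hcy hcz hyz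
  have := h4 hvb hvc hvy hbc hby hcy
  have := h4 hvb hvc hvz hbc hbz hcz
  have := h4 hbc hby hbz hcy hcz hyz
  have := hf hby; have := hf hbz; have := hf hcy; have := hf hcz
  omega

theorem ZeroSumK4Free.cliqueFree_three_or (hf : IsSignWeighting f)
    (h4 : ZeroSumK4Free f) : (signGraph f (-1)).CliqueFree 3 ∨ (signGraph f 1).CliqueFree 3 := by
  rw [or_iff_not_and_not]
  rintro ⟨hneg, hpos⟩
  simp only [CliqueFree, not_forall, not_not, is3Clique_iff] at hneg hpos
  obtain ⟨-, a, b, c, hab, hac, hbc, -⟩ := hneg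
  obtain ⟨-, x, y, z, hxy, hxz, hyz, -⟩ := hpos
  have hboth := h4.not_inTriangle_signGraph hf
  have ha : ¬InTriangle (signGraph f 1) a := fun h => hboth a ⟨⟨b, c, hab, hac, hbc⟩, h⟩
  have hb : ¬InTriangle (signGraph f 1) b := fun h =>
    hboth b ⟨⟨a, c, adj_symm _ hab, hbc, hac⟩, h⟩
  have hx : ¬InTriangle (signGraph f (-1)) x := fun h => hboth x ⟨h, ⟨y, z, hxy, hxz, hyz⟩⟩
  have hy : ¬InTriangle (signGraph f (-1)) y := fun h =>
    hboth y ⟨h, ⟨x, z, adj_symm _ hxy, hyz, hxz⟩⟩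
  have hax : a ≠ x := by rintro rfl; exact ha ⟨y, z, hxy, hxz, hyz⟩
  have hay : a ≠ y := by rintro rfl; exact ha ⟨x, z, adj_symm _ hxy, hyz, hxz⟩
  have hbx : b ≠ x := by rintro rfl; exact hb ⟨y, z, hxy, hxz, hyz⟩
  have hby : b ≠ y := by rintro rfl; exact hb ⟨x, z, adj_symm _ hxy, hyz, hxz⟩
  -- The weights between `{a, b}` and `{x, y}` have row sums `≤ 0` and column sums `≥ 0`.
  have hra : ¬(f {a, x} = 1 ∧ f {a, y} = 1) := fun h => ha ⟨x, y, ⟨hax, h.1⟩, ⟨hay, h.2⟩, hxy⟩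
  have hrb : ¬(f {b, x} = 1 ∧ f {b, y} = 1) := fun h => hb ⟨x, y, ⟨hbx, h.1⟩, ⟨hby, h.2⟩, hxy⟩
  have hcx : ¬(f {a, x} = -1 ∧ f {b, x} = -1) := fun h =>
    hx ⟨a, b, adj_symm _ ⟨hax, h.1⟩, adj_symm _ ⟨hbx, h.2⟩, hab⟩
  have hcy : ¬(f {a, y} = -1 ∧ f {b, y} = -1) := fun h =>
    hy ⟨a, b, adj_symm _ ⟨hay, h.1⟩, adj_symm _ ⟨hby, h.2⟩, hab⟩
  have := hf hax; have := hf hay; have := hf hbx; have := hf hby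
  exact h4 hab.1 hax hay hbx hby hxy.1 (by omega)

variable [Fintype V]

theorem ZeroSumK4Free.degree_signGraph_le_two (hf : IsSignWeighting f) (h4 : ZeroSumK4Free f)
    (hG : (signGraph f (-1)).CliqueFree 3) (v : V) : (signGraph f (-1)).degree v ≤ 2 := by
  by_contra! h
  rw [← card_neighborFinset_eq_degree, two_lt_card] at h
  obtain ⟨x, hx, y, hy, z, hz, hxy, hxz, hyz⟩ := h
  rw [mem_neighborFinset] at hx hy hz
  have hind := isIndepSet_neighborSet_of_triangleFree _ hG v
  have fxy := hf.eq_one_of_not_adj hxy (hind hx hy hxy)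
  have fxz := hf.eq_one_of_not_adj hxz (hind hx hz hxz)
  have fyz := hf.eq_one_of_not_adj hyz (hind hy hz hyz)
  exact h4 hx.1 hy.1 hz.1 hxy hxz hyz (by rw [hx.2, hy.2, hz.2, fxy, fxz, fyz]; norm_num)

theorem ZeroSumK4Free.exists_fourCycle (hf : IsSignWeighting f) (h4 : ZeroSumK4Free f)
    (hG : (signGraph f (-1)).CliqueFree 3) (hreg : (signGraph f (-1)).IsRegularOfDegree 2)
    (v : V) : ∃ b c d, v ≠ b ∧ v ≠ c ∧ v ≠ d ∧ b ≠ c ∧ b ≠ d ∧ c ≠ d ∧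
      (signGraph f (-1)).neighborFinset v = {b, c} ∧
      (signGraph f (-1)).neighborFinset b = {v, d} ∧
      (signGraph f (-1)).neighborFinset c = {v, d} ∧
      (signGraph f (-1)).neighborFinset d = {b, c} := by
  obtain ⟨b, c, hbc, hv⟩ := card_eq_two.1 (hreg v)
  have hvb : (signGraph f (-1)).Adj v b := by rw [← mem_neighborFinset, hv]; simp
  have hvc : (signGraph f (-1)).Adj v c := by rw [← mem_neighborFinset, hv]; simp
  obtain ⟨d, hbd, hdv⟩ := exists_mem_ne (s := (signGraph f (-1)).neighborFinset b)
    (by rw [card_neighborFinset_eq_degree, hreg b]; norm_num) v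
  rw [mem_neighborFinset] at hbd
  have hnbc : ¬(signGraph f (-1)).Adj b c :=
    isIndepSet_neighborSet_of_triangleFree _ hG v hvb hvc hbc
  have hcd : c ≠ d := by rintro rfl; exact hnbc hbd
  have hnvd : ¬(signGraph f (-1)).Adj v d := by
    rw [← mem_neighborFinset, hv]
    simp [hbd.ne.symm, hcd.symm]
  have hcd_adj : (signGraph f (-1)).Adj c d := by
    -- otherwise `{v, b, c, d}` has exactly the three negative edges `vb, vc, bd`
    by_contra hncd
    apply h4 hvb.1 hvc.1 hdv.symm hbc hbd.1 hcd
    rw [hvb.2, hvc.2, hbd.2, hf.eq_one_of_not_adj hdv.symm hnvd, hf.eq_one_of_not_adj hbc hnbc,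
      hf.eq_one_of_not_adj hcd hncd]
    norm_num
  exact ⟨b, c, d, hvb.1, hvc.1, hdv.symm, hbc, hbd.1, hcd, hv,
    neighborFinset_eq_pair (hreg b) (adj_symm _ hvb) hbd hdv.symm,
    neighborFinset_eq_pair (hreg c) (adj_symm _ hvc) hcd_adj hdv.symm,
    neighborFinset_eq_pair (hreg d) (adj_symm _ hbd) (adj_symm _ hcd_adj) hbc⟩

theorem ZeroSumK4Free.four_dvd_card (hf : IsSignWeighting f) (h4 : ZeroSumK4Free f)
    (hG : (signGraph f (-1)).CliqueFree 3) (hreg : (signGraph f (-1)).IsRegularOfDegree 2) :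
    4 ∣ Fintype.card V := by
  refine Fintype.dvd_card_of_blocks (signGraph f (-1)).closedBallTwo fun v => ?_
  obtain ⟨b, c, d, hvb, hvc, hvd, hbc, hbd, hcd, hv, hb, hc, hd⟩ :=
    h4.exists_fourCycle hf hG hreg v
  have hball := closedBallTwo_eq_of_fourCycle hv hb hc hd
  rw [hball v (by simp)]
  exact ⟨by simp, by simp [*], hball⟩

theorem ZeroSumK4Free.card_edgeFinset_signGraph_lt (hf : IsSignWeighting f)
    (h4 : ZeroSumK4Free f) (hG : (signGraph f (-1)).CliqueFree 3) :
    #(signGraph f (-1)).edgeFinset <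
      if Fintype.card V % 4 = 0 then Fintype.card V + 1 else Fintype.card V := by
  have hdeg := h4.degree_signGraph_le_two hf hG
  have hle := two_mul_card_edgeFinset_le _ hdeg
  split_ifs with h
  · omega
  · refine lt_of_le_of_ne (by omega) fun heq => h (Nat.mod_eq_zero_of_dvd ?_)
    exact h4.four_dvd_card hf hG (isRegularOfDegree_of_two_mul_card_edgeFinset_eq _ hdeg (by omega))

end SignWeighting

theorem zero_sum_K4_of_min_edge_count_general (n : ℕ) (f : Finset (Fin n) → ℤ)
    (hf : ∀ e ∈ Finset.powersetCard 2 (Finset.univ : Finset (Fin n)), f e = -1 ∨ f e = 1)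
    (hmin : (if n % 4 = 0 then n + 1 else n) ≤
      min (((Finset.powersetCard 2 (Finset.univ : Finset (Fin n))).filter
              (fun e => f e = -1)).card)
          (((Finset.powersetCard 2 (Finset.univ : Finset (Fin n))).filter
              (fun e => f e = 1)).card)) :
    ∃ S ∈ Finset.powersetCard 4 (Finset.univ : Finset (Fin n)),
      (∑ e ∈ Finset.powersetCard 2 S, f e) = 0 := by
  by_contra! hfree
  have hsign : IsSignWeighting f := fun x y hxy => hf _ (by simp [card_pair hxy])
  have h4 : ZeroSumK4Free f := fun a b c d hab hac had hbc hbd hcd hzero =>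
    hfree {a, b, c, d} (by simp [card_insert_of_notMem, *])
      (by rw [sum_powersetCard_two_quad f hab hac had hbc hbd hcd]; exact hzero)
  rw [le_min_iff] at hmin
  rcases h4.cliqueFree_three_or hsign with hneg | hpos
  · have hlt := h4.card_edgeFinset_signGraph_lt hsign hneg
    rw [card_edgeFinset_signGraph, Fintype.card_fin] at hlt
    exact hmin.1.not_gt hlt
  · have hlt := h4.neg.card_edgeFinset_signGraph_lt hsign.neg (by rwa [signGraph_neg])
    rw [card_edgeFinset_signGraph, Fintype.card_fin] at hlt
    simp only [Pi.neg_apply, neg_inj] at hlt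
    exact hmin.2.not_gt hlt

/-- If `n ≥ 5` and `f : E(K_n) → {-1,1}` satisfies `min{e(-1), e(1)} ≥ h(n)`, where
`h(n) = n+1` if `4 ∣ n` and `h(n) = n` otherwise, then there is a zero-sum copy of `K₄`. -/
theorem zero_sum_K4_of_min_edge_count (n : ℕ) (hn : 5 ≤ n) (f : Finset (Fin n) → ℤ)
    (hf : ∀ e ∈ Finset.powersetCard 2 (Finset.univ : Finset (Fin n)), f e = -1 ∨ f e = 1)
    (hmin : (if n % 4 = 0 then n + 1 else n) ≤
      min (((Finset.powersetCard 2 (Finset.univ : Finset (Fin n))).filter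
              (fun e => f e = -1)).card)
          (((Finset.powersetCard 2 (Finset.univ : Finset (Fin n))).filter
              (fun e => f e = 1)).card)) :
    ∃ S ∈ Finset.powersetCard 4 (Finset.univ : Finset (Fin n)),
      (∑ e ∈ Finset.powersetCard 2 S, f e) = 0 :=
  zero_sum_K4_of_min_edge_count_general n f hf hmin
end

section
/- Let S_1 be the set of positive integers n for which there exists a positive integer x with n(n − 1) = 2x(x − 1), and let S_2 be the set of perfect squares. Then for every positive integer m not belonging to S_1 ∩ S_2, there are infinitely many positive integers n for which there exists a balanced weighting f: E(K_n) → {-1, 1} such that no m-element vertex subset has edge weights summing to 0. -/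
/-!
Both weightings are built from vertex data, so that the weight of the clique on `S` depends only
on `|S|` and on `|S ∩ A|` for a distinguished vertex set `A`.

If `m` is not a square, take `n = K²`, give the vertices of `A` (with `|A| = C(K,2)`) sign `-1`,
the others sign `1`, and weight each edge by the product of the signs of its ends. Twice the
weight of the clique on `S` is `(|S| - 2|S ∩ A|)² - |S|`: it vanishes on the whole vertex set,
where the signs sum to `K² - 2 C(K,2) = K`, but it cannot vanish when `|S| = m`.

If `m ∉ S₁`, take `n ∈ S₁` with witness `x` and weight by `-1` exactly the edges inside a set `A`
of `x` vertices. The clique on `S` weighs `C(|S|,2) - 2 C(|S ∩ A|,2)`, which vanishes on the whole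
vertex set, while its vanishing for `|S| = m` would put `m` in `S₁`. A Pell recursion gives
infinitely many such `n`.
-/

open Finset

section CliqueWeight

variable {α : Type*}

def cliqueWeight (f : Finset α → ℤ) (S : Finset α) : ℤ := ∑ e ∈ S.powersetCard 2, f e

variable [DecidableEq α]

theorem two_mul_sum_powersetCard_two_prod {R : Type*} [CommRing R] (g : α → R) (S : Finset α) :
    2 * ∑ e ∈ S.powersetCard 2, ∏ i ∈ e, g i = (∑ i ∈ S, g i) ^ 2 - ∑ i ∈ S, g i ^ 2 := by
  induction S using Finset.induction_on with
  | empty => rw [powersetCard_eq_empty.2 (by simp)]; simp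
  | insert x s hx ih =>
    have hpairs : ∑ e ∈ (s.powersetCard 1).image (insert x), ∏ i ∈ e, g i
        = g x * ∑ i ∈ s, g i := by
      rw [sum_image, powersetCard_one, sum_map, mul_sum]
      · refine sum_congr rfl fun i hi => ?_
        simp [prod_pair (show x ≠ i by rintro rfl; exact hx hi)]
      · intro e he e' he' h
        simpa [erase_insert fun h => hx ((mem_powersetCard.1 he).1 h),
          erase_insert fun h => hx ((mem_powersetCard.1 he').1 h)] using congrArg (erase · x) h
    have hdisj : Disjoint (s.powersetCard 2) ((s.powersetCard 1).image (insert x)) := by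
      refine disjoint_right.2 fun e he he2 => ?_
      obtain ⟨e, -, rfl⟩ := mem_image.1 he
      exact hx ((mem_powersetCard.1 he2).1 (mem_insert_self x e))
    rw [powersetCard_succ_insert hx, sum_union hdisj, hpairs, sum_insert hx, sum_insert hx]
    linear_combination ih

def vertexSign (B : Finset α) (i : α) : ℤ := if i ∈ B then -1 else 1

def signProductWeight (B e : Finset α) : ℤ := ∏ i ∈ e, vertexSign B i

def blockWeight (A e : Finset α) : ℤ := if e ⊆ A then -1 else 1

theorem sum_vertexSign (B S : Finset α) :
    ∑ i ∈ S, vertexSign B i = #S - 2 * #(S ∩ B) := by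
  have h : ∀ i, vertexSign B i = 1 - 2 * if i ∈ B then 1 else 0 := by
    intro i; unfold vertexSign; split_ifs <;> norm_num
  rw [sum_congr rfl fun i _ => h i, sum_sub_distrib, ← mul_sum, sum_boole, filter_mem_eq_inter]
  simp

theorem signProductWeight_eq_neg_one_or_eq_one (B e : Finset α) :
    signProductWeight B e = -1 ∨ signProductWeight B e = 1 := by
  have hB : ∀ i, IsUnit (vertexSign B i) := fun i => by
    unfold vertexSign; split_ifs <;> simp
  exact (Int.isUnit_iff.1 (IsUnit.prod_iff.2 fun i _ => hB i)).symm

theorem two_mul_cliqueWeight_signProductWeight (B S : Finset α) :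
    2 * cliqueWeight (signProductWeight B) S = (#S - 2 * #(S ∩ B)) ^ 2 - #S := by
  have hsq : ∀ i, vertexSign B i ^ 2 = 1 := fun i => by
    unfold vertexSign; split_ifs <;> norm_num
  simp only [cliqueWeight, signProductWeight]
  rw [two_mul_sum_powersetCard_two_prod, sum_vertexSign]
  simp [hsq]

theorem blockWeight_eq_neg_one_or_eq_one (A e : Finset α) :
    blockWeight A e = -1 ∨ blockWeight A e = 1 := by
  unfold blockWeight; split_ifs <;> simp

theorem filter_subset_powersetCard_eq_powersetCard_inter (A S : Finset α) (k : ℕ) :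
    (S.powersetCard k).filter (· ⊆ A) = (S ∩ A).powersetCard k := by
  ext e; simp [mem_powersetCard, subset_inter_iff, and_right_comm]

theorem cliqueWeight_blockWeight (A S : Finset α) :
    cliqueWeight (blockWeight A) S = (#S).choose 2 - 2 * (#(S ∩ A)).choose 2 := by
  have h : ∀ e, blockWeight A e = 1 - 2 * if e ⊆ A then 1 else 0 := by
    intro e; unfold blockWeight; split_ifs <;> norm_num
  rw [cliqueWeight, sum_congr rfl fun e _ => h e, sum_sub_distrib, ← mul_sum, sum_boole,
    filter_subset_powersetCard_eq_powersetCard_inter]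
  simp

end CliqueWeight

theorem card_filter_eq_neg_one_eq_card_filter_eq_one {β : Type*} {s : Finset β} {f : β → ℤ}
    (hf : ∀ e ∈ s, f e = -1 ∨ f e = 1) (hsum : ∑ e ∈ s, f e = 0) :
    #(s.filter (f · = -1)) = #(s.filter (f · = 1)) := by
  have h : ∀ e ∈ s, f e = (if f e = 1 then 1 else 0) - if f e = -1 then 1 else 0 := by
    intro e he; rcases hf e he with h | h <;> simp [h]
  rw [sum_congr rfl h, sum_sub_distrib, sum_boole, sum_boole, sub_eq_zero] at hsum
  exact_mod_cast hsum.symm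

def BalancedZeroSumFree (m n : ℕ) : Prop :=
  0 < n ∧ ∃ f : Finset (Fin n) → ℤ, (∀ e ∈ powersetCard 2 univ, f e = -1 ∨ f e = 1) ∧
    #((powersetCard 2 univ).filter (f · = -1)) = #((powersetCard 2 univ).filter (f · = 1)) ∧
    ∀ S ∈ powersetCard m univ, cliqueWeight f S ≠ 0

theorem BalancedZeroSumFree.of_cliqueWeight {m n : ℕ} (hn : 0 < n) (f : Finset (Fin n) → ℤ)
    (hf : ∀ e, f e = -1 ∨ f e = 1) (huniv : cliqueWeight f univ = 0)
    (hfree : ∀ S : Finset (Fin n), #S = m → cliqueWeight f S ≠ 0) :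
    BalancedZeroSumFree m n :=
  ⟨hn, f, fun e _ => hf e, card_filter_eq_neg_one_eq_card_filter_eq_one (fun e _ => hf e) huniv,
    fun S hS => hfree S (mem_powersetCard.1 hS).2⟩

theorem Nat.choose_two_mul_two (n : ℕ) : n.choose 2 * 2 = n * (n - 1) := by
  rw [Nat.choose_two_right, Nat.div_two_mul_two_of_even (Nat.even_mul_pred_self n)]

theorem Nat.choose_two_eq_two_mul_choose_two_iff {a b : ℕ} :
    a.choose 2 = 2 * b.choose 2 ↔ a * (a - 1) = 2 * (b * (b - 1)) := by
  rw [← Nat.choose_two_mul_two, ← Nat.choose_two_mul_two]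
  omega

theorem balancedZeroSumFree_sq {m : ℕ} (hm : ∀ k, m ≠ k ^ 2) {K : ℕ} (hK : 0 < K) :
    BalancedZeroSumFree m (K ^ 2) := by
  obtain ⟨B, -, hB⟩ := exists_subset_card_eq (s := (univ : Finset (Fin (K ^ 2))))
    (n := K.choose 2) (by simpa using Nat.choose_le_pow K 2)
  refine .of_cliqueWeight (by positivity) (signProductWeight B)
    (signProductWeight_eq_neg_one_or_eq_one B) ?_ fun S hS hS0 => ?_
  · have h := two_mul_cliqueWeight_signProductWeight B univ
    have hK2 := congrArg (Nat.cast : ℕ → ℤ) (Nat.choose_two_mul_two K)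
    rw [univ_inter, hB, card_univ, Fintype.card_fin] at h
    push_cast [Nat.cast_sub hK] at h hK2
    have h2 : 2 * cliqueWeight (signProductWeight B) univ = 0 := by
      linear_combination h - (K ^ 2 - 2 * (K.choose 2 : ℤ) + K) * hK2
    omega
  · have h := two_mul_cliqueWeight_signProductWeight B S
    rw [hS0, hS] at h
    apply hm (#S - 2 * #(S ∩ B) : ℤ).natAbs
    zify
    rw [sq_abs, hS]
    linarith

theorem balancedZeroSumFree_of_mul_pred_eq {m n x : ℕ}
    (hm : ¬∃ y, 0 < y ∧ m * (m - 1) = 2 * (y * (y - 1))) (hn : 0 < n) (hxn : x ≤ n)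
    (hnx : n * (n - 1) = 2 * (x * (x - 1))) : BalancedZeroSumFree m n := by
  obtain ⟨A, -, hA⟩ := exists_subset_card_eq (s := (univ : Finset (Fin n))) (by simpa using hxn)
  refine .of_cliqueWeight hn (blockWeight A) (blockWeight_eq_neg_one_or_eq_one A) ?_
    fun S hS hS0 => ?_
  · rw [cliqueWeight_blockWeight, univ_inter, hA, card_univ, Fintype.card_fin,
      Nat.choose_two_eq_two_mul_choose_two_iff.2 hnx]
    push_cast
    ring
  · rw [cliqueWeight_blockWeight, hS, sub_eq_zero] at hS0
    have h := Nat.choose_two_eq_two_mul_choose_two_iff.1 (by exact_mod_cast hS0)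
    rcases Nat.eq_zero_or_pos #(S ∩ A) with ha | ha
    · exact hm ⟨1, one_pos, by simpa [ha] using h⟩
    · exact hm ⟨_, ha, h⟩

/-- With `u = 2s + 1`, `v = 2t + 1` the invariant `s (s + 1) = 2 t (t + 1)` reads
`u² - 2v² = -1`, and the step is multiplication of `u + v√2` by the unit `3 + 2√2`. -/
def pellPair : ℕ → ℕ × ℕ
  | 0 => (0, 0)
  | k + 1 =>
    (3 * (pellPair k).1 + 4 * (pellPair k).2 + 3, 2 * (pellPair k).1 + 3 * (pellPair k).2 + 2)

theorem pellPair_spec (k : ℕ) :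
    (pellPair k).1 * ((pellPair k).1 + 1) = 2 * ((pellPair k).2 * ((pellPair k).2 + 1)) := by
  induction k with
  | zero => rfl
  | succ k ih => simp only [pellPair]; linear_combination ih

theorem pellPair_snd_le_fst (k : ℕ) : (pellPair k).2 ≤ (pellPair k).1 := by
  cases k <;> simp only [pellPair] <;> omega

theorem strictMono_pellPair_fst : StrictMono fun k => (pellPair k).1 :=
  strictMono_nat_of_lt_succ fun k => by simp only [pellPair]; omega

theorem infinite_setOf_mul_pred_eq_two_mul_mul_pred :
    {n : ℕ | 0 < n ∧ ∃ x ≤ n, n * (n - 1) = 2 * (x * (x - 1))}.Infinite :=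
  Set.infinite_of_injective_forall_mem (f := fun k => (pellPair k).1 + 1)
    (add_left_injective 1 |>.comp strictMono_pellPair_fst.injective) fun k =>
      ⟨Nat.succ_pos _, (pellPair k).2 + 1, Nat.succ_le_succ (pellPair_snd_le_fst k), by
        simpa [mul_comm] using pellPair_spec k⟩

/-- For every positive integer `m` not in `S₁ ∩ S₂`, where
`S₁ = {n : ∃ x > 0, n(n-1) = 2x(x-1)}` and `S₂` is the set of perfect squares, there are
infinitely many positive integers `n` admitting a balanced weighting
`f : E(K_n) → {-1,1}` with no zero-sum copy of `K_m`. -/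
theorem balanced_zero_sum_Km_free_exists (m : ℕ) (hm : 0 < m)
    (hmS : m ∉ ({n : ℕ | 0 < n ∧ ∃ x : ℕ, 0 < x ∧ n * (n - 1) = 2 * (x * (x - 1))} ∩
      {n : ℕ | ∃ k : ℕ, 0 < k ∧ n = k ^ 2})) :
    {n : ℕ | 0 < n ∧ ∃ f : Finset (Fin n) → ℤ,
      (∀ e ∈ Finset.powersetCard 2 (Finset.univ : Finset (Fin n)), f e = -1 ∨ f e = 1) ∧
      (((Finset.powersetCard 2 (Finset.univ : Finset (Fin n))).filter
          (fun e => f e = -1)).card =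
        ((Finset.powersetCard 2 (Finset.univ : Finset (Fin n))).filter
          (fun e => f e = 1)).card) ∧
      (∀ S ∈ Finset.powersetCard m (Finset.univ : Finset (Fin n)),
        (∑ e ∈ Finset.powersetCard 2 S, f e) ≠ 0)}.Infinite := by
  change {n | BalancedZeroSumFree m n}.Infinite
  by_cases hS₁ : ∃ x, 0 < x ∧ m * (m - 1) = 2 * (x * (x - 1))
  · have hsq : ∀ k, m ≠ k ^ 2 := by
      rintro k rfl
      exact hmS ⟨⟨hm, hS₁⟩, k, pos_of_ne_zero (by rintro rfl; simp at hm), rfl⟩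
    exact Set.infinite_of_injective_forall_mem (f := fun k => (k + 1) ^ 2)
      (Nat.pow_left_injective two_ne_zero |>.comp (add_left_injective 1))
      fun k => balancedZeroSumFree_sq hsq k.succ_pos
  · refine infinite_setOf_mul_pred_eq_two_mul_mul_pred.mono ?_
    rintro n ⟨hn, x, hxn, hnx⟩
    exact balancedZeroSumFree_of_mul_pred_eq hS₁ hn hxn hnx
end
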